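/- Let D ≥ 1 be an integer, let ξ : ℝ_+^D → ℝ be continuous, convex and ℝ_+^D-increasing, let χ : ℝ_+^D → ℝ be Lipschitz, convex and ℝ_+^D-increasing, and let t ≥ 0. Then for every x ∈ ℝ_+^D, sup_{y ∈ ℝ_+^D} { χ(y) − (tξ)*(y−x) } = sup_{p ∈ ℝ_+^D} { p·x + tξ(p) − χ*(p) }, where χ*(p) = sup_{z ∈ ℝ_+^D} (z·p − χ(z)) and (tξ)*(y) = sup_{z ∈ ℝ_+^D} (z·y − tξ(z)). -/

import Mathlib

open MeasureTheory
open scoped NNReal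

/-- The nonnegative orthant `ℝ_+^D` in `ℝ^D`. -/
def orthant (D : ℕ) : Set (EuclideanSpace ℝ (Fin D)) := {x | ∀ i, 0 ≤ x i}

/-- The monotone conjugate `(tg)*(y) = sup_{z ∈ ℝ_+^D} (z·y − t·g(z))`, valued in
`ℝ ∪ {+∞}` (formalized as `EReal`). -/
noncomputable def tConj (D : ℕ) (t : ℝ) (g : EuclideanSpace ℝ (Fin D) → ℝ)
    (y : EuclideanSpace ℝ (Fin D)) : EReal :=
  ⨆ z : orthant D, (((inner ℝ z.1 y : ℝ) - t * g z.1 : ℝ) : EReal)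

/-!
The tool is a monotone Fenchel–Moreau theorem on the orthant: a convex, lower semicontinuous,
`ℝ_+^D`-increasing `f` satisfies `f y = sup_{p ∈ ℝ_+^D} (p·y − f*(p))` for `y ∈ ℝ_+^D`.
Expanding `χ(y)` in this way and using `(tξ)*(y − x) ≥ p·(y − x) − tξ(p)` bounds the Hopf–Lax
side by the Hopf side; expanding `tξ(p)` and using `χ*(p) ≥ (w + x)·p − χ(w + x)` bounds the Hopf
side by the Hopf–Lax term at `y = w + x`.

Fenchel–Moreau comes from the affine minorants of a lower semicontinuous convex function
(Hahn–Banach). Monotonicity lets one replace the slope `p` of such a minorant through `(y, c)` by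
its positive part: compare `f z` with `f` at the point obtained from `z` by lowering each
coordinate `z i` with `p i < 0` to `min (z i) (y i)`.
-/

open scoped RealInnerProductSpace

namespace EReal

lemma coe_sub_le_of_coe_sub_le {a b : ℝ} {v : EReal} (h : ((a - b : ℝ) : EReal) ≤ v) :
    (a : EReal) - v ≤ b := by
  have hv : v ≠ ⊥ := ne_bot_of_le_ne_bot (coe_ne_bot _) h
  rw [sub_le_iff_le_add (Or.inl hv) (Or.inr (coe_ne_bot b))]
  calc (a : EReal) = b + ((a - b : ℝ) : EReal) := by norm_cast; ring
    _ ≤ b + v := add_le_add_right h _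

lemma coe_sub_sub_le_coe_sub {a b : ℝ} {u v : EReal} (h : ((a - b : ℝ) : EReal) ≤ v) :
    (a : EReal) - u - v ≤ b - u := by
  rw [sub_eq_add_neg, sub_eq_add_neg, add_right_comm, ← sub_eq_add_neg, ← sub_eq_add_neg]
  exact sub_le_sub (coe_sub_le_of_coe_sub_le h) le_rfl

lemma iSup_sub_le {ι : Sort*} (f : ι → EReal) (u : EReal) : (⨆ i, f i) - u ≤ ⨆ i, (f i - u) := by
  induction u using EReal.rec with
  | bot =>
    rcases eq_or_ne (⨆ i, f i) ⊥ with h | h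
    · rw [h]; exact bot_le
    · obtain ⟨i, hi⟩ : ∃ i, f i ≠ ⊥ := by simpa [iSup_eq_bot] using h
      exact le_iSup_of_le i ((sub_bot hi).symm ▸ le_top)
  | coe c =>
    refine sub_le_of_le_add (iSup_le fun i => ?_)
    calc f i = f i - c + c := sub_add_cancel.symm
      _ ≤ (⨆ j, (f j - c)) + c := add_le_add_left (le_iSup (fun j => f j - c) i) _
  | top => rw [sub_top]; exact bot_le

lemma coe_add_iSup_le {ι : Sort*} (c : ℝ) (f : ι → EReal) :
    (c : EReal) + ⨆ i, f i ≤ ⨆ i, ((c : EReal) + f i) := by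
  simpa [sub_eq_add_neg, add_comm] using iSup_sub_le f ((-c : ℝ) : EReal)

end EReal

section Orthant

variable {D : ℕ}

lemma add_mem_orthant {a b : EuclideanSpace ℝ (Fin D)} (ha : a ∈ orthant D)
    (hb : b ∈ orthant D) : a + b ∈ orthant D :=
  fun i => add_nonneg (ha i) (hb i)

lemma isClosed_orthant : IsClosed (orthant D) := by
  simp only [orthant, Set.ofPred_forall]
  exact isClosed_iInter fun i => isClosed_le continuous_const (EuclideanSpace.proj i).continuous

lemma exists_mem_orthant_slope_of_affine_minorant {f : EuclideanSpace ℝ (Fin D) → ℝ}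
    (hmono : ∀ a ∈ orthant D, ∀ b ∈ orthant D, f a ≤ f (a + b))
    {y p : EuclideanSpace ℝ (Fin D)} {c : ℝ} (hy : y ∈ orthant D)
    (hp : ∀ z ∈ orthant D, ⟪z - y, p⟫ + c ≤ f z) :
    ∃ q ∈ orthant D, ∀ z ∈ orthant D, ⟪z - y, q⟫ + c ≤ f z := by
  refine ⟨WithLp.toLp 2 fun i => max (p i) 0, fun i => le_max_right _ _, fun z hz => ?_⟩
  set z' : EuclideanSpace ℝ (Fin D) :=
    WithLp.toLp 2 fun i => if 0 ≤ p i then z i else min (z i) (y i)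
  have hz' : z' ∈ orthant D := fun i => by
    simp only [z']
    split_ifs
    exacts [hz i, le_min (hz i) (hy i)]
  have hzz' : z - z' ∈ orthant D := fun i => by
    simp only [z', PiLp.sub_apply]
    split_ifs
    exacts [(sub_self _).ge, sub_nonneg.2 (min_le_left _ _)]
  have hinner : ⟪z - y, WithLp.toLp 2 fun i => max (p i) 0⟫ ≤ ⟪z' - y, p⟫ := by
    simp only [PiLp.inner_apply, RCLike.inner_apply, conj_trivial]
    refine Finset.sum_le_sum fun i _ => ?_
    simp only [z', PiLp.sub_apply]
    split_ifs with h
    · rw [max_eq_left h]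
    · rw [max_eq_right (not_le.1 h).le]
      nlinarith [min_le_right (z i) (y i), not_le.1 h]
  calc ⟪z - y, _⟫ + c ≤ ⟪z' - y, p⟫ + c := by linarith
    _ ≤ f z' := hp z' hz'
    _ ≤ f (z' + (z - z')) := hmono z' hz' _ hzz'
    _ = f z := by rw [add_sub_cancel]

lemma exists_mem_orthant_slope_affine_minorant {f : EuclideanSpace ℝ (Fin D) → ℝ}
    (hconv : ConvexOn ℝ (orthant D) f) (hlsc : LowerSemicontinuousOn f (orthant D))
    (hmono : ∀ a ∈ orthant D, ∀ b ∈ orthant D, f a ≤ f (a + b))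
    {y : EuclideanSpace ℝ (Fin D)} (hy : y ∈ orthant D) {a : ℝ} (ha : a < f y) :
    ∃ p ∈ orthant D, ∀ z ∈ orthant D, ⟪z - y, p⟫ + a ≤ f z := by
  obtain ⟨l, c, hle, hly⟩ := hconv.exists_affine_le_of_lt (𝕜 := ℝ) hy ha isClosed_orthant hlsc
  refine exists_mem_orthant_slope_of_affine_minorant hmono hy
    (p := (InnerProductSpace.toDual ℝ _).symm l) fun z hz => ?_
  have := hle ⟨z, hz⟩
  simp only [Pi.add_apply, Set.domRestrict_apply, Function.comp_apply, RCLike.re_to_real,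
    Function.const_apply] at this hly
  rw [real_inner_comm, inner_sub_right, InnerProductSpace.toDual_symm_apply,
    InnerProductSpace.toDual_symm_apply]
  linarith

end Orthant

section Conjugate

variable {D : ℕ} {t : ℝ} {g : EuclideanSpace ℝ (Fin D) → ℝ} {y z : EuclideanSpace ℝ (Fin D)}

lemma le_tConj (hz : z ∈ orthant D) : ((⟪z, y⟫ - t * g z : ℝ) : EReal) ≤ tConj D t g y :=
  le_iSup (fun z : orthant D => ((⟪z.1, y⟫ - t * g z.1 : ℝ) : EReal)) ⟨z, hz⟩

lemma tConj_le_coe {c : ℝ} (h : ∀ z ∈ orthant D, ⟪z, y⟫ - t * g z ≤ c) :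
    tConj D t g y ≤ c :=
  iSup_le fun z => EReal.coe_le_coe_iff.2 (h z.1 z.2)

lemma tConj_one_mul : tConj D 1 (fun z => t * g z) = tConj D t g := by
  funext y; simp only [tConj, one_mul]

theorem iSup_inner_sub_tConj_eq (hconv : ConvexOn ℝ (orthant D) g)
    (hlsc : LowerSemicontinuousOn g (orthant D))
    (hmono : ∀ a ∈ orthant D, ∀ b ∈ orthant D, g a ≤ g (a + b)) (hy : y ∈ orthant D) :
    ⨆ p : orthant D, ((⟪p.1, y⟫ : ℝ) : EReal) - tConj D 1 g p.1 = g y := by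
  refine le_antisymm (iSup_le fun p => EReal.coe_sub_le_of_coe_sub_le ?_) ?_
  · simpa [real_inner_comm] using le_tConj (t := 1) (g := g) (y := p.1) hy
  refine EReal.ge_of_forall_gt_iff_ge.1 fun a ha => ?_
  obtain ⟨p, hp, hmin⟩ :=
    exists_mem_orthant_slope_affine_minorant hconv hlsc hmono hy (EReal.coe_lt_coe_iff.1 ha)
  have hconj : tConj D 1 g p ≤ ((⟪p, y⟫ - a : ℝ) : EReal) := tConj_le_coe fun z hz => by
    have := hmin z hz
    rw [inner_sub_left, real_inner_comm p y] at this
    linarith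
  calc (a : EReal) = ((⟪p, y⟫ : ℝ) : EReal) - ((⟪p, y⟫ - a : ℝ) : EReal) := by
        norm_cast; ring
    _ ≤ ((⟪p, y⟫ : ℝ) : EReal) - tConj D 1 g p := EReal.sub_le_sub le_rfl hconj
    _ ≤ _ := le_iSup (fun q : orthant D => ((⟪q.1, y⟫ : ℝ) : EReal) - tConj D 1 g q.1) ⟨p, hp⟩

end Conjugate

section HopfFormula

variable {D : ℕ} {ξ χ : EuclideanSpace ℝ (Fin D) → ℝ} {t : ℝ} {x : EuclideanSpace ℝ (Fin D)}

theorem hopfLax_le_hopf (hχconv : ConvexOn ℝ (orthant D) χ)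
    (hχlsc : LowerSemicontinuousOn χ (orthant D))
    (hχmono : ∀ a ∈ orthant D, ∀ b ∈ orthant D, χ a ≤ χ (a + b)) :
    ⨆ y : orthant D, ((χ y.1 : EReal) - tConj D t ξ (y.1 - x)) ≤
      ⨆ p : orthant D, (((⟪p.1, x⟫ + t * ξ p.1 : ℝ) : EReal) - tConj D 1 χ p.1) := by
  refine iSup_le fun y => ?_
  rw [← iSup_inner_sub_tConj_eq hχconv hχlsc hχmono y.2]
  refine (EReal.iSup_sub_le _ _).trans (iSup_mono fun p => EReal.coe_sub_sub_le_coe_sub ?_)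
  have := le_tConj (t := t) (g := ξ) (y := y.1 - x) p.2
  rw [inner_sub_right] at this
  convert this using 2
  ring

theorem hopf_le_hopfLax (hξconv : ConvexOn ℝ (orthant D) ξ)
    (hξcont : ContinuousOn ξ (orthant D))
    (hξmono : ∀ a ∈ orthant D, ∀ b ∈ orthant D, ξ a ≤ ξ (a + b)) (ht : 0 ≤ t)
    (hx : x ∈ orthant D) :
    ⨆ p : orthant D, (((⟪p.1, x⟫ + t * ξ p.1 : ℝ) : EReal) - tConj D 1 χ p.1) ≤
      ⨆ y : orthant D, ((χ y.1 : EReal) - tConj D t ξ (y.1 - x)) := by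
  refine iSup_le fun p => ?_
  have hbiconj := iSup_inner_sub_tConj_eq (g := fun z => t * ξ z) (hξconv.smul ht)
    (continuousOn_const.mul hξcont).lowerSemicontinuousOn
    (fun a ha b hb => mul_le_mul_of_nonneg_left (hξmono a ha b hb) ht) p.2
  rw [tConj_one_mul] at hbiconj
  calc ((⟪p.1, x⟫ + t * ξ p.1 : ℝ) : EReal) - tConj D 1 χ p.1
      = ((⟪p.1, x⟫ : ℝ) : EReal) + (⨆ w : orthant D, ((⟪w.1, p.1⟫ : ℝ) : EReal) - tConj D t ξ w.1)
        - tConj D 1 χ p.1 := by rw [hbiconj, EReal.coe_add]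
    _ ≤ (⨆ w : orthant D, (((⟪p.1, x⟫ : ℝ) : EReal) + (((⟪w.1, p.1⟫ : ℝ) : EReal)
        - tConj D t ξ w.1))) - tConj D 1 χ p.1 :=
      EReal.sub_le_sub (EReal.coe_add_iSup_le _ _) le_rfl
    _ ≤ ⨆ w : orthant D, (((⟪p.1, x⟫ : ℝ) : EReal) + (((⟪w.1, p.1⟫ : ℝ) : EReal)
        - tConj D t ξ w.1) - tConj D 1 χ p.1) := EReal.iSup_sub_le _ _
    _ ≤ ⨆ w : orthant D, ((χ (w.1 + x) : EReal) - tConj D t ξ w.1) := iSup_mono fun w => by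
      rw [← add_sub_assoc, ← EReal.coe_add]
      refine EReal.coe_sub_sub_le_coe_sub ?_
      have := le_tConj (t := 1) (g := χ) (y := p.1) (add_mem_orthant w.2 hx)
      rw [inner_add_left, real_inner_comm (p.1 : EuclideanSpace ℝ (Fin D)) x] at this
      convert this using 2
      ring
    _ ≤ ⨆ y : orthant D, ((χ y.1 : EReal) - tConj D t ξ (y.1 - x)) :=
      iSup_le fun w => le_iSup_of_le ⟨w.1 + x, add_mem_orthant w.2 hx⟩ (by simp)

end HopfFormula

theorem hopfLax_eq_hopf_general (D : ℕ)
    (ξ : EuclideanSpace ℝ (Fin D) → ℝ)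
    (hξcont : ContinuousOn ξ (orthant D))
    (hξconv : ConvexOn ℝ (orthant D) ξ)
    (hξmono : ∀ x ∈ orthant D, ∀ y ∈ orthant D, ξ x ≤ ξ (x + y))
    (χ : EuclideanSpace ℝ (Fin D) → ℝ) (K : ℝ≥0)
    (hχlip : LipschitzOnWith K χ (orthant D))
    (hχconv : ConvexOn ℝ (orthant D) χ)
    (hχmono : ∀ x ∈ orthant D, ∀ y ∈ orthant D, χ x ≤ χ (x + y))
    (t : ℝ) (ht : 0 ≤ t)
    (x : EuclideanSpace ℝ (Fin D)) (hx : x ∈ orthant D) :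
    (⨆ y : orthant D, ((χ y.1 : EReal) - tConj D t ξ (y.1 - x))) =
      ⨆ p : orthant D, ((((inner ℝ p.1 x : ℝ) + t * ξ p.1 : ℝ) : EReal) - tConj D 1 χ p.1) :=
  le_antisymm (hopfLax_le_hopf hχconv hχlip.continuousOn.lowerSemicontinuousOn hχmono)
    (hopf_le_hopfLax hξconv hξcont hξmono ht hx)

/-- for `ξ` continuous, convex and `ℝ_+^D`-increasing, `χ` Lipschitz, convex
and `ℝ_+^D`-increasing, and `t ≥ 0`, one has for every `x ∈ ℝ_+^D`:
`sup_{y ∈ ℝ_+^D} (χ(y) − (tξ)*(y−x)) = sup_{p ∈ ℝ_+^D} (p·x + tξ(p) − χ*(p))`. -/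
theorem hopfLax_eq_hopf (D : ℕ) (hD : 1 ≤ D)
    (ξ : EuclideanSpace ℝ (Fin D) → ℝ)
    (hξcont : ContinuousOn ξ (orthant D))
    (hξconv : ConvexOn ℝ (orthant D) ξ)
    (hξmono : ∀ x ∈ orthant D, ∀ y ∈ orthant D, ξ x ≤ ξ (x + y))
    (χ : EuclideanSpace ℝ (Fin D) → ℝ) (K : ℝ≥0)
    (hχlip : LipschitzOnWith K χ (orthant D))
    (hχconv : ConvexOn ℝ (orthant D) χ)
    (hχmono : ∀ x ∈ orthant D, ∀ y ∈ orthant D, χ x ≤ χ (x + y))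
    (t : ℝ) (ht : 0 ≤ t)
    (x : EuclideanSpace ℝ (Fin D)) (hx : x ∈ orthant D) :
    (⨆ y : orthant D, ((χ y.1 : EReal) - tConj D t ξ (y.1 - x))) =
      ⨆ p : orthant D, ((((inner ℝ p.1 x : ℝ) + t * ξ p.1 : ℝ) : EReal) - tConj D 1 χ p.1) :=
  hopfLax_eq_hopf_general D ξ hξcont hξconv hξmono χ K hχlip hχconv hχmono t ht x hx
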